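/- arXiv:1302.2077 — 3 statements merged into one kernel-verified Lean document; each statement's English description precedes it below -/
import Mathlib

section
/- Let A be a commutative ring, let L be a unit in A, and let a,b,a',b' be positive integers with d = gcd(b,b'). Then the resultant of the polynomials 1 − L^a·T^b and 1 − L^{a'}·T^{b'} (in the variable T) equals (−1)^{b'} · L^{a·b'} · (1 − L^{(a'b − ab')/d})^d, where L^{(a'b−ab')/d} means the appropriate (possibly negative) power of the unit L. In particular, if (a,b) and (a',b') are not proportional, then this resultant is a unit whenever 1 − L^m is a unit in A for every nonzero integer m. -/
set_option autoImplicit false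

open Polynomial

/-- The resultant of two polynomials `P`, `Q` over a commutative ring,
defined as the determinant of their Sylvester matrix. -/
noncomputable def resultant {A : Type*} [CommRing A] (P Q : A[X]) : A :=
  Matrix.det (Matrix.of (fun i j : Fin (Q.natDegree + P.natDegree) =>
    if (i : ℕ) < Q.natDegree then
      (if (i : ℕ) ≤ (j : ℕ) ∧ (j : ℕ) ≤ (i : ℕ) + P.natDegree then
        P.coeff ((i : ℕ) + P.natDegree - (j : ℕ)) else 0)
    else
      (if (i : ℕ) - Q.natDegree ≤ (j : ℕ) ∧ (j : ℕ) ≤ (i : ℕ) - Q.natDegree + Q.natDegree then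
        Q.coeff ((i : ℕ) - Q.natDegree + Q.natDegree - (j : ℕ)) else 0)))

/-!
Both polynomials have unit coefficients, so the resultant can be computed by the Euclidean
algorithm on the exponents. Modulo `1 - v T^{b'}` we have `1 - u T^{b+b'} ≡ 1 - u v⁻¹ T^b`;
replacing a polynomial by one congruent to it modulo the other leaves the resultant unchanged, and
lowering its formal degree multiplies the resultant by a power of the other's leading coefficient.
Hence `Res(1 - u T^{b+b'}, 1 - v T^{b'}) = v^{b'} Res(1 - u v⁻¹ T^b, 1 - v T^{b'})`, and
symmetrically. Descending to an exponent `0` gives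
`Res(1 - u T^b, 1 - v T^{b'}) = (-1)^{b'} (u^{b'/d} - v^{b/d})^d` with `d = gcd(b, b')`.
For `u = L^a`, `v = L^{a'}` this is the claimed formula, because
`L^{a b'/d} (1 - L^{(a'b - ab')/d}) = L^{a b'/d} - L^{a' b/d}`.
-/

lemma mul_sub_mul_ediv_gcd (a b a' b' : ℕ) :
    ((a' : ℤ) * b - (a : ℤ) * b') / (b.gcd b' : ℤ) =
      a' * (b / b.gcd b' : ℕ) - a * (b' / b.gcd b' : ℕ) := by
  set d := b.gcd b'
  rcases Nat.eq_zero_or_pos d with hd | hd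
  · simp [hd]
  have hb : (b : ℤ) = (b / d : ℕ) * d := by
    exact_mod_cast (Nat.div_mul_cancel (Nat.gcd_dvd_left b b')).symm
  have hb' : (b' : ℤ) = (b' / d : ℕ) * d := by
    exact_mod_cast (Nat.div_mul_cancel (Nat.gcd_dvd_right b b')).symm
  rw [hb, hb', ← mul_assoc, ← mul_assoc, ← sub_mul, Int.mul_ediv_cancel _ (by positivity)]

lemma mul_sub_mul_ediv_gcd_ne_zero {a b a' b' : ℕ} (h : (a' : ℤ) * b ≠ (a : ℤ) * b') :
    ((a' : ℤ) * b - (a : ℤ) * b') / (b.gcd b' : ℤ) ≠ 0 := by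
  have hdvd : (b.gcd b' : ℤ) ∣ (a' : ℤ) * b - (a : ℤ) * b' :=
    dvd_sub (Dvd.dvd.mul_left (Int.natCast_dvd_natCast.mpr (Nat.gcd_dvd_left b b')) _)
      (Dvd.dvd.mul_left (Int.natCast_dvd_natCast.mpr (Nat.gcd_dvd_right b b')) _)
  intro h0
  have := Int.mul_ediv_cancel' hdvd
  rw [h0, mul_zero, eq_comm, sub_eq_zero] at this
  exact h this

section

variable {A : Type*} [CommRing A]

/-- Reversing the order of both rows and columns and transposing turns the Sylvester matrix of
`resultant` into Mathlib's `Polynomial.sylvester`. -/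
theorem resultant_eq_polynomial_resultant (P Q : A[X]) :
    _root_.resultant P Q = P.resultant Q := by
  unfold _root_.resultant
  rw [Polynomial.resultant, ← Matrix.det_transpose,
    ← Matrix.det_submatrix_equiv_self ((finCongr (add_comm _ _)).trans Fin.revPerm)]
  congr 1
  ext ⟨i, hi⟩ ⟨j, hj⟩
  simp only [Matrix.of_apply, Matrix.submatrix_apply, Matrix.transpose_apply, sylvester,
    Equiv.trans_apply, finCongr_apply, Fin.revPerm_apply, Fin.addCases, Fin.val_rev, Fin.val_cast,
    Fin.val_subNat, Fin.val_castLT, Set.mem_Icc, eq_rec_constant]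
  split_ifs <;> first | rfl | omega | (congr 1; omega)

lemma val_pow_mul_val_mul_inv_pow (u v : Aˣ) (n : ℕ) :
    (v : A) ^ n * ((u * v⁻¹ : Aˣ) : A) ^ n = (u : A) ^ n := by
  rw [← mul_pow, ← Units.val_mul, mul_comm u, mul_inv_cancel_left]

namespace Polynomial

lemma natDegree_one_sub_C_mul_X_pow_le (c : A) (n : ℕ) :
    ((1 : A[X]) - C c * X ^ n).natDegree ≤ n := by
  compute_degree

lemma natDegree_one_sub_C_mul_X_pow {c : A} (hc : c ≠ 0) (n : ℕ) :
    ((1 : A[X]) - C c * X ^ n).natDegree = n := by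
  rcases Nat.eq_zero_or_pos n with rfl | hn
  · rw [pow_zero, mul_one, ← C_1, ← C_sub, natDegree_C]
  · rw [natDegree_sub_eq_right_of_natDegree_lt] <;> rw [natDegree_C_mul_X_pow n c hc]
    simpa

lemma coeff_one_sub_C_mul_X_pow_self_pow (c : A) (n : ℕ) :
    ((1 : A[X]) - C c * X ^ n).coeff n ^ n = (-c) ^ n := by
  rcases Nat.eq_zero_or_pos n with rfl | hn
  · simp
  · simp [coeff_one, hn.ne']

lemma resultant_one_sub_C_mul_X_pow_add_left (u v : Aˣ) (b b' : ℕ) :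
    resultant (1 - C (u : A) * X ^ (b + b')) (1 - C (v : A) * X ^ b') (b + b') b' =
      (v : A) ^ b' *
        resultant (1 - C ((u * v⁻¹ : Aˣ) : A) * X ^ b) (1 - C (v : A) * X ^ b') b b' := by
  have hsplit : (1 : A[X]) - C (u : A) * X ^ (b + b') = (1 - C ((u * v⁻¹ : Aˣ) : A) * X ^ b) +
      (1 - C (v : A) * X ^ b') * (C ((u * v⁻¹ : Aˣ) : A) * X ^ b) := by
    have : ((u * v⁻¹ : Aˣ) : A) * v = u := by simp
    rw [← this, C_mul, pow_add]
    ring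
  rw [hsplit, resultant_add_mul_left _ _ _ _ _
      (Nat.add_le_add_right (natDegree_C_mul_X_pow_le _ _) _)
      (natDegree_one_sub_C_mul_X_pow_le _ _),
    resultant_add_left_deg _ _ _ _ _ (natDegree_one_sub_C_mul_X_pow_le _ _),
    coeff_one_sub_C_mul_X_pow_self_pow, neg_pow (v : A), ← mul_assoc, ← pow_add,
    ← Nat.mul_succ, (Nat.even_mul_succ_self b').neg_one_pow, one_mul]

lemma resultant_one_sub_C_mul_X_pow_add_right (u v : Aˣ) (b b' : ℕ) :
    resultant (1 - C (u : A) * X ^ b) (1 - C (v : A) * X ^ (b' + b)) b (b' + b) =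
      (-u : A) ^ b *
        resultant (1 - C (u : A) * X ^ b) (1 - C ((v * u⁻¹ : Aˣ) : A) * X ^ b') b b' := by
  have hsplit : (1 : A[X]) - C (v : A) * X ^ (b' + b) = (1 - C ((v * u⁻¹ : Aˣ) : A) * X ^ b') +
      (1 - C (u : A) * X ^ b) * (C ((v * u⁻¹ : Aˣ) : A) * X ^ b') := by
    have : ((v * u⁻¹ : Aˣ) : A) * u = v := by simp
    rw [← this, C_mul, pow_add]
    ring
  rw [hsplit, resultant_add_mul_right _ _ _ _ _
      (Nat.add_le_add_right (natDegree_C_mul_X_pow_le _ _) _)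
      (natDegree_one_sub_C_mul_X_pow_le _ _),
    resultant_add_right_deg _ _ _ _ _ (natDegree_one_sub_C_mul_X_pow_le _ _),
    coeff_one_sub_C_mul_X_pow_self_pow]

theorem resultant_one_sub_C_mul_X_pow (u v : Aˣ) (b b' : ℕ) :
    resultant (1 - C (u : A) * X ^ b) (1 - C (v : A) * X ^ b') b b' =
      (-1) ^ b' * ((u : A) ^ (b' / b.gcd b') - (v : A) ^ (b / b.gcd b')) ^ b.gcd b' := by
  rcases Nat.eq_zero_or_pos b with rfl | hb
  · rcases Nat.eq_zero_or_pos b' with rfl | hb'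
    · simp
    · simp [Nat.div_self hb', ← mul_pow]
  rcases Nat.eq_zero_or_pos b' with rfl | hb'
  · simp [Nat.div_self hb]
  rcases le_total b' b with h | h
  · obtain ⟨c, rfl⟩ := Nat.exists_eq_add_of_le' h
    rw [resultant_one_sub_C_mul_X_pow_add_left,
      resultant_one_sub_C_mul_X_pow (u * v⁻¹) v c b',
      Nat.gcd_add_self_left, Nat.add_div_of_dvd_right (Nat.gcd_dvd_left c b')]
    set d := c.gcd b'
    have key : (v : A) ^ (b' / d) * (((u * v⁻¹ : Aˣ) : A) ^ (b' / d) - (v : A) ^ (c / d)) =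
        (u : A) ^ (b' / d) - (v : A) ^ (c / d + b' / d) := by
      rw [mul_sub, val_pow_mul_val_mul_inv_pow, ← pow_add, add_comm]
    rw [← key, mul_pow, ← pow_mul, Nat.div_mul_cancel (Nat.gcd_dvd_right c b')]
    ring
  · obtain ⟨c, rfl⟩ := Nat.exists_eq_add_of_le' h
    rw [resultant_one_sub_C_mul_X_pow_add_right,
      resultant_one_sub_C_mul_X_pow u (v * u⁻¹) b c,
      Nat.gcd_add_self_right, Nat.add_div_of_dvd_right (Nat.gcd_dvd_right b c)]
    set d := b.gcd c
    have key : (u : A) ^ (b / d) * ((u : A) ^ (c / d) - ((v * u⁻¹ : Aˣ) : A) ^ (b / d)) =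
        (u : A) ^ (c / d + b / d) - (v : A) ^ (b / d) := by
      rw [mul_sub, val_pow_mul_val_mul_inv_pow, ← pow_add, add_comm]
    rw [← key, mul_pow, ← pow_mul, Nat.div_mul_cancel (Nat.gcd_dvd_left b c)]
    ring
termination_by b + b'

end Polynomial

theorem resultant_one_sub_C_mul_X_pow (u v : Aˣ) (b b' : ℕ) :
    _root_.resultant (1 - C (u : A) * X ^ b) (1 - C (v : A) * X ^ b') =
      (-1) ^ b' * ((u : A) ^ (b' / b.gcd b') - (v : A) ^ (b / b.gcd b')) ^ b.gcd b' := by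
  rcases subsingleton_or_nontrivial A with _ | _
  · exact Subsingleton.elim _ _
  rw [resultant_eq_polynomial_resultant, natDegree_one_sub_C_mul_X_pow u.ne_zero,
    natDegree_one_sub_C_mul_X_pow v.ne_zero, Polynomial.resultant_one_sub_C_mul_X_pow]

theorem resultant_one_sub_C_pow_mul_X_pow (L : Aˣ) (a b a' b' : ℕ) :
    _root_.resultant ((1 : A[X]) - C ((L : A) ^ a) * X ^ b)
        ((1 : A[X]) - C ((L : A) ^ a') * X ^ b') =
      (-1) ^ b' * ((L ^ (a * b') : Aˣ) : A) *
        (1 - ((L ^ (((a' : ℤ) * b - (a : ℤ) * b') / (b.gcd b' : ℤ)) : Aˣ) : A)) ^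
          b.gcd b' := by
  set d := b.gcd b'
  set U := L ^ (a * (b' / d))
  set V := L ^ (a' * (b / d))
  have hLe : L ^ (((a' : ℤ) * b - (a : ℤ) * b') / (d : ℤ)) = V * U⁻¹ := by
    rw [mul_sub_mul_ediv_gcd, zpow_sub, ← Nat.cast_mul, ← Nat.cast_mul, zpow_natCast,
      zpow_natCast]
  have hLab' : L ^ (a * b') = U ^ d := by
    rw [← pow_mul, mul_assoc, Nat.div_mul_cancel (Nat.gcd_dvd_right b b')]
  have hUV : (U : A) - V = U * (1 - ((V * U⁻¹ : Aˣ) : A)) := by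
    rw [Units.val_mul]
    linear_combination (V : A) * U.mul_inv
  calc _ = (-1) ^ b' * ((U : A) - V) ^ d := by
        simpa [U, V, pow_mul] using _root_.resultant_one_sub_C_mul_X_pow (L ^ a) (L ^ a') b b'
    _ = _ := by rw [hUV, mul_pow, hLe, hLab', ← Units.val_pow_eq_pow_val, mul_assoc]

end

theorem stmt_1_general (A : Type*) [CommRing A] (L : Aˣ) (a b a' b' : ℕ)
    (d : ℕ) (hd : d = Nat.gcd b b') :
    _root_.resultant ((1 : A[X]) - C ((L : A) ^ a) * X ^ b)
        ((1 : A[X]) - C ((L : A) ^ a') * X ^ b')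
      = (-1) ^ b' * ((L ^ (a * b') : Aˣ) : A) *
          ((1 : A) - ((L ^ (((a' : ℤ) * b - (a : ℤ) * b') / (d : ℤ)) : Aˣ) : A)) ^ d
    ∧ ((a' : ℤ) * b ≠ (a : ℤ) * b' →
        (∀ m : ℤ, m ≠ 0 → IsUnit ((1 : A) - ((L ^ m : Aˣ) : A))) →
        IsUnit (_root_.resultant ((1 : A[X]) - C ((L : A) ^ a) * X ^ b)
          ((1 : A[X]) - C ((L : A) ^ a') * X ^ b'))) := by
  subst hd
  refine ⟨resultant_one_sub_C_pow_mul_X_pow L a b a' b', fun hne hunit => ?_⟩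
  rw [resultant_one_sub_C_pow_mul_X_pow]
  exact ((isUnit_one.neg.pow b').mul (L ^ (a * b')).isUnit).mul
    ((hunit _ (mul_sub_mul_ediv_gcd_ne_zero hne)).pow _)

/-- For a unit `L` of a commutative ring `A` and positive integers `a, b, a', b'` with
`d = gcd(b,b')`, the resultant of `1 − L^a T^b` and `1 − L^{a'} T^{b'}` equals
`(−1)^{b'} L^{ab'} (1 − L^{(a'b − ab')/d})^d` (powers of the unit `L`, possibly negative).
In particular, if `(a,b)` and `(a',b')` are not proportional, this resultant is a unit
whenever `1 − L^m` is a unit for every nonzero integer `m`. -/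
theorem stmt_1 (A : Type*) [CommRing A] (L : Aˣ) (a b a' b' : ℕ)
    (ha : 0 < a) (hb : 0 < b) (ha' : 0 < a') (hb' : 0 < b')
    (d : ℕ) (hd : d = Nat.gcd b b') :
    _root_.resultant ((1 : A[X]) - C ((L : A) ^ a) * X ^ b)
        ((1 : A[X]) - C ((L : A) ^ a') * X ^ b')
      = (-1) ^ b' * ((L ^ (a * b') : Aˣ) : A) *
          ((1 : A) - ((L ^ (((a' : ℤ) * b - (a : ℤ) * b') / (d : ℤ)) : Aˣ) : A)) ^ d
    ∧ ((a' : ℤ) * b ≠ (a : ℤ) * b' →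
        (∀ m : ℤ, m ≠ 0 → IsUnit ((1 : A) - ((L ^ m : Aˣ) : A))) →
        IsUnit (_root_.resultant ((1 : A[X]) - C ((L : A) ^ a) * X ^ b)
          ((1 : A[X]) - C ((L : A) ^ a') * X ^ b'))) :=
  stmt_1_general A L a b a' b' d hd
end

section
/- Let Z(T) = Σ_{n≥0} c_n T^n ∈ ℤ[[T]] be a power series, and suppose there exist positive integers a₁,…,a_r, b₁,…,b_r and nonnegative integers d₁,…,d_r, and a polynomial Q ∈ ℚ(L)[T] evaluated at a real number L > 1, such that Z(T)·∏_{i=1}^r (1 − L^{a_i} T^{b_i})^{d_i} is a polynomial. If no two pairs (a_i,b_i), (a_j,b_j) are proportional, then Z admits a partial fraction decomposition Z(T) = Q₀(T) + Σ_{i=1}^r Σ_{j=1}^{d_i} Q_{i,j}(T)/(1 − L^{a_i} T^{b_i})^j with deg Q_{i,j} ≤ b_i − 1, and consequently for all n larger than deg Q₀, c_n = Σ_{i=1}^r Σ_{j=1}^{d_i} binom(j + ⌊n/b_i⌋ − 1, j−1) · q_{i,j,n mod b_i} · L^{a_i ⌊n/b_i⌋}, where Q_{i,j}(T) = Σ_{m=0}^{b_i−1}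 q_{i,j,m} T^m. -/
/-!
Since every `1 - c X^b` has constant term `1`, the hypothesis says `Z = P / ∏ gᵢ^{dᵢ}` in `ℝ⟦X⟧`
with `gᵢ = 1 - L^{aᵢ} X^{bᵢ}`. Non-proportionality makes the `gᵢ` pairwise coprime: `gᵢ` and `gₖ`
divide `1 - c X^{bᵢbₖ}` for two distinct values of `c`. Bézout identities and repeated Euclidean
division by `gᵢ` then give the partial fraction decomposition. Finally `(1 - c X^b)^{-(j+1)}` is
the series `∑ₘ binom(j+m, j) (cX)^m` with `X` replaced by `X^b`, so multiplying it by a polynomial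
of degree `< b` leaves a single term in each coefficient.
-/

open PowerSeries
open scoped Polynomial
open Function

namespace Polynomial

variable {K : Type*} [Field K]

theorem isCoprime_one_sub_C_mul_of_ne (Y : K[X]) {α β : K} (h : α ≠ β) :
    IsCoprime (1 - C α * Y) (1 - C β * Y) := by
  have hunit : C (β - α)⁻¹ * (C β - C α) = 1 := by
    rw [← map_sub, ← map_mul, inv_mul_cancel₀ (sub_ne_zero.2 h.symm), map_one]
  refine ⟨C (β - α)⁻¹ * C β, -(C (β - α)⁻¹ * C α), ?_⟩
  linear_combination hunit

theorem isCoprime_one_sub_C_mul_X_pow {c₁ c₂ : K} {b₁ b₂ : ℕ} (h : c₁ ^ b₂ ≠ c₂ ^ b₁) :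
    IsCoprime (1 - C c₁ * X ^ b₁) (1 - C c₂ * X ^ b₂) := by
  have hdvd₁ : 1 - C c₁ * X ^ b₁ ∣ 1 - C (c₁ ^ b₂) * X ^ (b₁ * b₂) := by
    rw [C_pow, pow_mul, ← mul_pow]
    exact one_sub_dvd_one_sub_pow _ b₂
  have hdvd₂ : 1 - C c₂ * X ^ b₂ ∣ 1 - C (c₂ ^ b₁) * X ^ (b₁ * b₂) := by
    rw [C_pow, mul_comm b₁, pow_mul, ← mul_pow]
    exact one_sub_dvd_one_sub_pow _ b₁
  exact ((isCoprime_one_sub_C_mul_of_ne _ h).of_isCoprime_of_dvd_left hdvd₁)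
    |>.of_isCoprime_of_dvd_right hdvd₂

theorem degree_one_sub_C_mul_X_pow {c : K} (hc : c ≠ 0) {b : ℕ} (hb : b ≠ 0) :
    (1 - C c * X ^ b).degree = (b : WithBot ℕ) := by
  rw [degree_sub_eq_right_of_degree_lt] <;> rw [degree_C_mul_X_pow b hc]
  rw [degree_one]
  exact_mod_cast Nat.pos_of_ne_zero hb

end Polynomial

namespace PowerSeries

theorem coeff_coe_mul_expand {R : Type*} [CommRing R] (p : ℕ) (hp : p ≠ 0) (q : R[X])
    (hq : q.degree < p) (φ : R⟦X⟧) (n : ℕ) :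
    coeff n ((q : R⟦X⟧) * expand p hp φ) = q.coeff (n % p) * coeff (n / p) φ := by
  rw [coeff_mul, Finset.sum_eq_single_of_mem (n % p, p * (n / p))
    (by simp [Nat.mod_add_div])]
  · rw [Polynomial.coeff_coe, coeff_expand_mul]
  · rintro ⟨x, y⟩ hxy hne
    rw [Finset.HasAntidiagonal.mem_antidiagonal] at hxy
    rw [coeff_expand, Polynomial.coeff_coe]
    split_ifs with hdvd
    · obtain ⟨k, rfl⟩ := hdvd
      have hpx : p ≤ x := by
        by_contra! hx
        obtain ⟨hk, hx⟩ := (Nat.div_mod_unique (Nat.pos_of_ne_zero hp)).2 ⟨hxy, hx⟩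
        exact hne (by rw [hk, hx])
      rw [Polynomial.coeff_eq_zero_of_degree_lt (hq.trans_le (by exact_mod_cast hpx)), zero_mul]
    · rw [mul_zero]

theorem one_sub_C_mul_X_pow_eq_expand {R : Type*} [CommRing R] (c : R) (b : ℕ) (hb : b ≠ 0) :
    (1 - C c * X ^ b : R⟦X⟧) = expand b hb (rescale c (1 - X)) := by
  simp [rescale_X, expand_C]

theorem inv_one_sub_C_mul_X_pow_pow {K : Type*} [Field K] (c : K) (b : ℕ) (hb : b ≠ 0) (j : ℕ) :
    ((1 - C c * X ^ b : K⟦X⟧) ^ (j + 1))⁻¹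
      = expand b hb (rescale c (mk fun n => (Nat.choose (j + n) j : K))) := by
  rw [inv_eq_iff_mul_eq_one, one_sub_C_mul_X_pow_eq_expand c b hb, ← map_pow, ← map_pow,
    ← map_mul, ← map_mul, mk_add_choose_mul_one_sub_pow_eq_one, map_one, map_one]
  simp [hb]

theorem coeff_coe_mul_inv_one_sub_C_mul_X_pow_pow {K : Type*} [Field K] (c : K) (b : ℕ)
    (hb : b ≠ 0) (j : ℕ) (q : K[X]) (hq : q.degree < b) (n : ℕ) :
    coeff n ((q : K⟦X⟧) * ((1 - C c * X ^ b : K⟦X⟧) ^ (j + 1))⁻¹)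
      = (Nat.choose (j + n / b) j : K) * q.coeff (n % b) * c ^ (n / b) := by
  rw [inv_one_sub_C_mul_X_pow_pow c b hb, coeff_coe_mul_expand b hb q hq, coeff_rescale, coeff_mk]
  ring

theorem coeff_coe_add_sum_mul_inv_one_sub_C_mul_X_pow_pow {K ι : Type*} [Field K] [Fintype ι]
    (c : ι → K) (b : ι → ℕ) (hb : ∀ i, b i ≠ 0) (d : ι → ℕ) (Q₀ : K[X])
    (Q : (i : ι) → Fin (d i) → K[X]) (hQ : ∀ i j, (Q i j).degree < b i) {n : ℕ}
    (hn : Q₀.natDegree < n) :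
    coeff n ((Q₀ : K⟦X⟧) + ∑ i, ∑ j : Fin (d i),
        (Q i j : K⟦X⟧) * ((1 - C (c i) * X ^ b i : K⟦X⟧) ^ ((j : ℕ) + 1))⁻¹)
      = ∑ i, ∑ j : Fin (d i),
          (Nat.choose (j + n / b i) j : K) * (Q i j).coeff (n % b i) * c i ^ (n / b i) := by
  rw [map_add, Polynomial.coeff_coe, Polynomial.coeff_eq_zero_of_natDegree_lt hn, zero_add]
  simp only [map_sum]
  exact Finset.sum_congr rfl fun i _ => Finset.sum_congr rfl fun j _ =>
    coeff_coe_mul_inv_one_sub_C_mul_X_pow_pow _ _ (hb i) _ _ (hQ i j) n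

section PartialFractions

variable {K : Type*} [Field K]

theorem mul_inv_mul_eq_of_add_eq_one {φ ψ u v : K⟦X⟧} (hφ : constantCoeff φ ≠ 0)
    (hψ : constantCoeff ψ ≠ 0) (huv : u * φ + v * ψ = 1) (f : K⟦X⟧) :
    f * (φ * ψ)⁻¹ = f * u * ψ⁻¹ + f * v * φ⁻¹ := by
  rw [PowerSeries.mul_inv_rev]
  linear_combination (-(f * ψ⁻¹ * φ⁻¹)) * huv + (f * u * ψ⁻¹) * PowerSeries.mul_inv_cancel φ hφ
    + (f * v * φ⁻¹) * PowerSeries.mul_inv_cancel ψ hψ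

theorem exists_coe_mul_inv_pow_eq (g : K[X]) (hg : g.coeff 0 ≠ 0) (d : ℕ) (f : K[X]) :
    ∃ (q : K[X]) (s : Fin d → K[X]), (∀ j, (s j).degree < g.degree) ∧
      (f : K⟦X⟧) * ((g : K⟦X⟧) ^ d)⁻¹
        = q + ∑ j : Fin d, (s j : K⟦X⟧) * ((g : K⟦X⟧) ^ ((j : ℕ) + 1))⁻¹ := by
  induction d generalizing f with
  | zero => exact ⟨f, Fin.elim0, fun j => j.elim0, by simp⟩
  | succ d ih =>
    have hG : constantCoeff (g : K⟦X⟧) ≠ 0 := by rwa [Polynomial.constantCoeff_coe]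
    have hg0 : g ≠ 0 := by rintro rfl; exact hg (Polynomial.coeff_zero 0)
    obtain ⟨q, s, hdeg, heq⟩ := ih (f / g)
    refine ⟨q, Fin.snoc s (f % g), fun j => ?_, ?_⟩
    · refine Fin.lastCases ?_ (fun j => ?_) j
      · simpa using Polynomial.degree_mod_lt f hg0
      · simpa using hdeg j
    · have hcancel : (g : K⟦X⟧) * ((g : K⟦X⟧) ^ (d + 1))⁻¹ = ((g : K⟦X⟧) ^ d)⁻¹ := by
        rw [pow_succ', PowerSeries.mul_inv_rev, mul_left_comm, PowerSeries.mul_inv_cancel _ hG,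
          mul_one]
      rw [Fin.sum_univ_castSucc]
      simp only [Fin.snoc_castSucc, Fin.snoc_last, Fin.val_castSucc, Fin.val_last]
      calc (f : K⟦X⟧) * ((g : K⟦X⟧) ^ (d + 1))⁻¹
          = (f % g : K[X]) * ((g : K⟦X⟧) ^ (d + 1))⁻¹
            + (f / g : K[X]) * ((g : K⟦X⟧) ^ d)⁻¹ := by
            conv_lhs => rw [← EuclideanDomain.mod_add_div f g]
            rw [← hcancel]
            push_cast
            ring
        _ = _ := by rw [heq]; ring

theorem exists_coe_mul_inv_prod_eq {ι : Type*} (H : ι → K[X]) (hH : ∀ i, (H i).coeff 0 ≠ 0)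
    (s : Finset ι) (hcop : (s : Set ι).Pairwise (IsCoprime on H)) (f : K[X]) :
    ∃ (q : K[X]) (g : ι → K[X]),
      (f : K⟦X⟧) * (∏ i ∈ s, (H i : K⟦X⟧))⁻¹ = q + ∑ i ∈ s, (g i : K⟦X⟧) * (H i : K⟦X⟧)⁻¹ := by
  classical
  induction s using Finset.induction_on generalizing f with
  | empty => exact ⟨f, 0, by simp⟩
  | insert a s ha ih =>
    rw [Finset.coe_insert] at hcop
    obtain ⟨u, v, huv⟩ := IsCoprime.prod_right fun i hi =>
      hcop (Set.mem_insert a _) (Set.mem_insert_of_mem a hi) (ne_of_mem_of_not_mem hi ha).symm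
    obtain ⟨q, g, hg⟩ := ih (hcop.mono (Set.subset_insert a _)) (f * u)
    refine ⟨q, update g a (f * v), ?_⟩
    have hprod : constantCoeff (∏ i ∈ s, (H i : K⟦X⟧)) ≠ 0 := by
      simp [map_prod, Finset.prod_ne_zero_iff, Polynomial.constantCoeff_coe, hH]
    have huv' : (u : K⟦X⟧) * H a + v * ∏ i ∈ s, (H i : K⟦X⟧) = 1 := by
      simpa only [map_add, map_mul, map_prod, map_one,
        Polynomial.coeToPowerSeries.ringHom_apply] using
        congrArg Polynomial.coeToPowerSeries.ringHom huv
    have hupd : ∑ i ∈ s, (update g a (f * v) i : K⟦X⟧) * (H i : K⟦X⟧)⁻¹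
        = ∑ i ∈ s, (g i : K⟦X⟧) * (H i : K⟦X⟧)⁻¹ :=
      Finset.sum_congr rfl fun i hi => by rw [update_of_ne (ne_of_mem_of_not_mem hi ha)]
    rw [Finset.prod_insert ha, Finset.sum_insert ha, update_self, hupd,
      mul_inv_mul_eq_of_add_eq_one (by rw [Polynomial.constantCoeff_coe]; exact hH a) hprod huv',
      ← Polynomial.coe_mul, hg]
    push_cast
    ring

theorem exists_coe_mul_inv_prod_pow_eq {ι : Type*} [Fintype ι] (g : ι → K[X])
    (hg : ∀ i, (g i).coeff 0 ≠ 0) (hcop : Pairwise (IsCoprime on g)) (d : ι → ℕ) (f : K[X]) :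
    ∃ (q : K[X]) (s : (i : ι) → Fin (d i) → K[X]), (∀ i j, (s i j).degree < (g i).degree) ∧
      (f : K⟦X⟧) * (∏ i, (g i : K⟦X⟧) ^ d i)⁻¹
        = q + ∑ i, ∑ j : Fin (d i), (s i j : K⟦X⟧) * ((g i : K⟦X⟧) ^ ((j : ℕ) + 1))⁻¹ := by
  obtain ⟨q, h, hh⟩ := exists_coe_mul_inv_prod_eq (fun i => g i ^ d i)
    (fun i => by
      rw [Polynomial.coeff_zero_eq_eval_zero, Polynomial.eval_pow,
        ← Polynomial.coeff_zero_eq_eval_zero]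
      exact pow_ne_zero _ (hg i)) Finset.univ
    (fun i _ k _ hik => (hcop hik).pow) f
  choose q' s hdeg heq using fun i => exists_coe_mul_inv_pow_eq (g i) (hg i) (d i) (h i)
  refine ⟨q + ∑ i, q' i, s, hdeg, ?_⟩
  have hsum : ((∑ i, q' i : K[X]) : K⟦X⟧) = ∑ i, (q' i : K⟦X⟧) :=
    map_sum Polynomial.coeToPowerSeries.ringHom _ _
  push_cast at hh ⊢
  rw [hh, Finset.sum_congr rfl fun i _ => heq i, Finset.sum_add_distrib, hsum]
  ring

end PartialFractions

end PowerSeries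

theorem stmt_9_general (Z : PowerSeries ℤ) (L : ℝ) (hL : 1 < L) (r : ℕ)
    (a b d : Fin r → ℕ) (hb : ∀ i, 0 < b i)
    (hprop : ∀ i j, i ≠ j → a i * b j ≠ a j * b i)
    (hpoly : ∃ P : Polynomial ℝ,
      (PowerSeries.map (Int.castRingHom ℝ) Z) *
          ∏ i, ((1 : PowerSeries ℝ) - PowerSeries.C (L ^ a i) * PowerSeries.X ^ b i) ^ d i
        = (P : PowerSeries ℝ)) :
    ∃ (Q₀ : Polynomial ℝ) (Q : (i : Fin r) → Fin (d i) → Polynomial ℝ),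
      (∀ (i : Fin r) (j : Fin (d i)), (Q i j).degree < ((b i : ℕ) : WithBot ℕ)) ∧
      (PowerSeries.map (Int.castRingHom ℝ) Z
        = (Q₀ : PowerSeries ℝ) +
          ∑ i, ∑ j : Fin (d i),
            ((Q i j : PowerSeries ℝ) *
              (((1 : PowerSeries ℝ) - PowerSeries.C (L ^ a i) * PowerSeries.X ^ b i)
                  ^ ((j : ℕ) + 1))⁻¹)) ∧
      (∀ n : ℕ, Q₀.natDegree < n →
        ((PowerSeries.coeff n Z : ℤ) : ℝ)
          = ∑ i, ∑ j : Fin (d i),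
              (Nat.choose ((j : ℕ) + n / b i) (j : ℕ) : ℝ) *
                (Q i j).coeff (n % b i) * L ^ (a i * (n / b i))) := by
  obtain ⟨P, hP⟩ := hpoly
  let g : Fin r → ℝ[X] := fun i => 1 - Polynomial.C (L ^ a i) * Polynomial.X ^ b i
  have hg_coe : ∀ i, (g i : ℝ⟦X⟧) = 1 - C (L ^ a i) * X ^ b i := fun i => by simp [g]
  have hLa : ∀ i, L ^ a i ≠ 0 := fun i => pow_ne_zero _ (by linarith)
  have hcop : Pairwise (IsCoprime on g) := fun i k hik =>
    Polynomial.isCoprime_one_sub_C_mul_X_pow fun h => hprop i k hik <|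
      (pow_right_strictMono₀ hL).injective (by simpa only [← pow_mul, mul_comm] using h)
  obtain ⟨Q₀, Q, hQdeg, hQ⟩ :=
    exists_coe_mul_inv_prod_pow_eq g (fun i => by simp [g, (hb i).ne]) hcop d P
  simp only [hg_coe] at hQ
  have hZ : PowerSeries.map (Int.castRingHom ℝ) Z = Q₀ + ∑ i, ∑ j : Fin (d i),
      (Q i j : ℝ⟦X⟧) * ((1 - C (L ^ a i) * X ^ b i) ^ ((j : ℕ) + 1))⁻¹ := by
    rw [← hQ, PowerSeries.eq_mul_inv_iff_mul_eq (by simp [map_prod, fun i => (hb i).ne']), hP]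
  have hQdeg' : ∀ i j, (Q i j).degree < b i := fun i j =>
    (hQdeg i j).trans_eq (Polynomial.degree_one_sub_C_mul_X_pow (hLa i) (hb i).ne')
  refine ⟨Q₀, Q, hQdeg', hZ, fun n hn => ?_⟩
  rw [← eq_intCast (Int.castRingHom ℝ), ← PowerSeries.coeff_map, hZ,
    coeff_coe_add_sum_mul_inv_one_sub_C_mul_X_pow_pow _ _ (fun i => (hb i).ne') _ _ _ hQdeg' hn]
  simp only [pow_mul]

/-- Coefficient extraction from a rational power series with denominator
`∏ (1 − L^{a_i} T^{b_i})^{d_i}` (no two pairs `(a_i,b_i)` proportional):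
partial fraction decomposition `Z = Q₀ + Σ_{i,j} Q_{i,j}/(1 − L^{a_i}T^{b_i})^j` with
`deg Q_{i,j} ≤ b_i − 1`, and for `n > deg Q₀`,
`c_n = Σ_{i,j} binom(j + ⌊n/b_i⌋ − 1, j−1) q_{i,j,n mod b_i} L^{a_i ⌊n/b_i⌋}`. -/
theorem stmt_9 (Z : PowerSeries ℤ) (L : ℝ) (hL : 1 < L) (r : ℕ)
    (a b d : Fin r → ℕ) (ha : ∀ i, 0 < a i) (hb : ∀ i, 0 < b i)
    (hprop : ∀ i j, i ≠ j → a i * b j ≠ a j * b i)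
    (hpoly : ∃ P : Polynomial ℝ,
      (PowerSeries.map (Int.castRingHom ℝ) Z) *
          ∏ i, ((1 : PowerSeries ℝ) - PowerSeries.C (L ^ a i) * PowerSeries.X ^ b i) ^ d i
        = (P : PowerSeries ℝ)) :
    ∃ (Q₀ : Polynomial ℝ) (Q : (i : Fin r) → Fin (d i) → Polynomial ℝ),
      (∀ (i : Fin r) (j : Fin (d i)), (Q i j).degree < ((b i : ℕ) : WithBot ℕ)) ∧
      (PowerSeries.map (Int.castRingHom ℝ) Z
        = (Q₀ : PowerSeries ℝ) +
          ∑ i, ∑ j : Fin (d i),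
            ((Q i j : PowerSeries ℝ) *
              (((1 : PowerSeries ℝ) - PowerSeries.C (L ^ a i) * PowerSeries.X ^ b i)
                  ^ ((j : ℕ) + 1))⁻¹)) ∧
      (∀ n : ℕ, Q₀.natDegree < n →
        ((PowerSeries.coeff n Z : ℤ) : ℝ)
          = ∑ i, ∑ j : Fin (d i),
              (Nat.choose ((j : ℕ) + n / b i) (j : ℕ) : ℝ) *
                (Q i j).coeff (n % b i) * L ^ (a i * (n / b i))) :=
  stmt_9_general Z L hL r a b d hb hprop hpoly
end

section
/- Let k be a finite field with nontrivial character ψ, K = k((t)), R = k[[t]], and r : K → k a nonzero k-linear map vanishing on t^{-a}R for some integer a; let ν be the conductor of r (the smallest such a). Define the Fourier transform of a Schwartz–Bruhat function φ on K by 𝓕φ(y) = ∫_K φ(x)ψ(r(xy)) dx with Haar measure vol(R) = 1. Then for every Schwartz–Bruhat function φ on K^n (with the pairing ⟨x,y⟩ = Σ x_j y_j and transform 𝓕φ(y) = ∫ φ(x)ψ(r(⟨x,y⟩))dx), one has 𝓕𝓕φ(x) = q^{−nν} φ(−x), where q = |k|. -/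
/-!
A Schwartz–Bruhat function of level `(M, N)` on `K^n` is a finite combination of indicators of
cosets of `(t^N R)^n` inside `(t^M R)^n`, so its integral is a finite sum over representatives
of `(t^M R / t^N R)^n`. The measure is only known on balls, so these are first shown to be
null-measurable: the balls of radius `L` tiling a larger ball have total measure equal to that of
the larger ball, hence their measurable hulls are pairwise a.e. disjoint.

Computing `𝓕φ(y)` at a level `(M, L)` with `L` large, the digits in degrees `[N, L)` contribute
the character sum of a `k`-linear form, which vanishes unless the form does, i.e. unless
`y ∈ (t^(ν-N) R)^n`, because `r` kills `t^ν R` but not `t^(ν-1)`. So `𝓕φ` is a combination of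
characters times the indicator of `(t^(ν-N) R)^n`, whose transform is `q^(-n(ν-N))` times the
indicator of `(t^N R)^n`; summing up gives `q^(-nν) φ(-x)`.
-/

set_option autoImplicit false

open MeasureTheory

/-- The Fourier transform on `K^n`, `K = k((t))`:
`𝓕φ(y) = ∫ φ(x) ψ(r(⟨x,y⟩)) dx` with respect to the Haar measure `μ` on `K^n`. -/
noncomputable def fourierTransform (k : Type*) [Field k] (n : ℕ)
    [MeasurableSpace (Fin n → LaurentSeries k)]
    (μ : Measure (Fin n → LaurentSeries k))
    (ψ : AddChar k ℂ) (r : LaurentSeries k →ₗ[k] k)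
    (φ : (Fin n → LaurentSeries k) → ℂ) :
    (Fin n → LaurentSeries k) → ℂ :=
  fun y => ∫ x, φ x * ψ (r (∑ i, x i * y i)) ∂μ

lemma aedisjoint_of_sum_measure_le {α ι : Type*} [MeasurableSpace α] {μ : Measure α} [Fintype ι]
    {s : ι → Set α} (hs : ∀ i, MeasurableSet (s i)) (hsum : ∑ i, μ (s i) ≤ μ (⋃ i, s i))
    (hfin : ∑ i, μ (s i) ≠ ⊤) {a b : ι} (hab : a ≠ b) : AEDisjoint μ (s a) (s b) := by
  classical
  set S := ⋃ i ∈ Finset.univ.erase b, s i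
  have hcover : ⋃ i, s i ⊆ S ∪ s b := by
    refine Set.iUnion_subset fun i => ?_
    rcases eq_or_ne i b with rfl | hi
    · exact Set.subset_union_right
    · exact Set.subset_union_of_subset_left
        (Set.subset_biUnion_of_mem (u := s) (by simpa using hi)) _
  have hle : ∑ i, μ (s i) + μ (S ∩ s b) ≤ ∑ i, μ (s i) + 0 := calc
    _ ≤ μ (S ∪ s b) + μ (S ∩ s b) := by gcongr; exact hsum.trans (measure_mono hcover)
    _ = μ S + μ (s b) := measure_union_add_inter S (hs b)
    _ ≤ ∑ i ∈ Finset.univ.erase b, μ (s i) + μ (s b) := by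
      gcongr; exact measure_biUnion_finset_le _ _
    _ = ∑ i, μ (s i) + 0 := by rw [Finset.sum_erase_add _ _ (Finset.mem_univ b), add_zero]
  exact measure_mono_null
    (Set.inter_subset_inter_left _ (Set.subset_biUnion_of_mem (u := s) (by simpa using hab)))
    (nonpos_iff_eq_zero.1 ((ENNReal.add_le_add_iff_left hfin).1 hle))

lemma sum_addChar_comp_eq_zero {F V R : Type*} [Field F] [AddCommGroup V] [Module F V]
    [Fintype V] [CommRing R] [IsDomain R] [CharZero R] {ψ : AddChar F R} (hψ : ψ ≠ 1)
    {ℓ : V →ₗ[F] F} (hℓ : ℓ ≠ 0) : ∑ v, ψ (ℓ v) = 0 := by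
  obtain ⟨a, ha⟩ : ∃ a, ψ a ≠ 1 := by
    by_contra! h
    exact hψ (AddChar.ext _ _ fun a => by simpa using h a)
  obtain ⟨v, hv⟩ : ∃ v, ℓ v ≠ 0 := by
    by_contra! h
    exact hℓ (LinearMap.ext h)
  refine AddChar.sum_eq_zero_iff_ne_zero (ψ := ψ.compAddMonoidHom ℓ.toAddMonoidHom) |>.2
    fun h => ha ?_
  simpa [div_mul_cancel₀ _ hv] using DFunLike.congr_fun h ((a / ℓ v) • v)

open HahnSeries

namespace LocalFourier

variable {k : Type*} {n : ℕ}

variable (k n) in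
abbrev Digits (M L : ℤ) : Type _ := Fin n → Finset.Ico M L → k

lemma card_digits [Fintype k] (M L : ℤ) :
    Fintype.card (Digits k n M L) = Fintype.card k ^ ((L - M).toNat * n) := by
  rw [Fintype.card_fun, Fintype.card_fun, Fintype.card_coe, Int.card_Ico, Fintype.card_fin, pow_mul]

lemma card_digits_mul_zpow {F : Type*} [Field F] [CharZero F] [Fintype k] [Nonempty k] {M L : ℤ}
    (hML : M ≤ L) :
    (Fintype.card (Digits k n M L) : F) * (Fintype.card k : F) ^ (-((n : ℤ) * L))
      = (Fintype.card k : F) ^ (-((n : ℤ) * M)) := by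
  have hq : (Fintype.card k : F) ≠ 0 := Nat.cast_ne_zero.2 Fintype.card_ne_zero
  rw [card_digits, Nat.cast_pow, ← zpow_natCast, ← zpow_add₀ hq]
  congr 1
  push_cast [Int.toNat_of_nonneg (sub_nonneg.2 hML)]
  ring

def splitDigits {M N L : ℤ} (hMN : M ≤ N) (hNL : N ≤ L) :
    Digits k n M L ≃ Digits k n M N × Digits k n N L where
  toFun τ :=
    (fun i j => τ i ⟨j, Finset.Ico_subset_Ico_right hNL j.2⟩,
      fun i j => τ i ⟨j, Finset.Ico_subset_Ico_left hMN j.2⟩)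
  invFun p i j :=
    if h : (j : ℤ) < N then p.1 i ⟨j, Finset.mem_Ico.2 ⟨(Finset.mem_Ico.1 j.2).1, h⟩⟩
    else p.2 i ⟨j, Finset.mem_Ico.2 ⟨not_lt.1 h, (Finset.mem_Ico.1 j.2).2⟩⟩
  left_inv τ := by
    funext i j
    by_cases h : (j : ℤ) < N <;> simp [h]
  right_inv p := by
    ext i j
    · simp [(Finset.mem_Ico.1 j.2).2]
    · simp [(Finset.mem_Ico.1 j.2).1]

variable [Field k]

def lattice (m : ℤ) : AddSubgroup (LaurentSeries k) where
  carrier := {z | ∀ j < m, z.coeff j = 0}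
  add_mem' ha hb j hj := by simp [ha j hj, hb j hj]
  zero_mem' _ _ := rfl
  neg_mem' ha j hj := by simp [ha j hj]

lemma mem_lattice {m : ℤ} {z : LaurentSeries k} : z ∈ lattice m ↔ ∀ j < m, z.coeff j = 0 :=
  Iff.rfl

lemma lattice_antitone : Antitone (lattice (k := k)) :=
  fun _ _ h _ hz j hj => hz j (hj.trans_le h)

lemma mem_lattice_iff_order {m : ℤ} {z : LaurentSeries k} :
    z ∈ lattice m ↔ z = 0 ∨ m ≤ z.order := by
  refine ⟨fun h => or_iff_not_imp_left.2 fun hz => ?_, ?_⟩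
  · by_contra! hlt
    exact hz (coeff_order_eq_zero.1 (h _ hlt))
  · rintro (rfl | h) j hj
    · rfl
    · exact coeff_eq_zero_of_lt_order (hj.trans_le h)

lemma mul_mem_lattice {i j : ℤ} {a b : LaurentSeries k} (ha : a ∈ lattice i)
    (hb : b ∈ lattice j) : a * b ∈ lattice (i + j) := by
  rcases mem_lattice_iff_order.1 ha with rfl | ha
  · simp
  rcases mem_lattice_iff_order.1 hb with rfl | hb
  · simp
  rcases eq_or_ne a 0 with rfl | ha0
  · simp
  rcases eq_or_ne b 0 with rfl | hb0
  · simp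
  exact mem_lattice_iff_order.2 (Or.inr (by rw [order_mul ha0 hb0]; exact add_le_add ha hb))

lemma single_mem_lattice (m : ℤ) (c : k) : (single m c : LaurentSeries k) ∈ lattice m :=
  fun _ hj => coeff_single_of_ne hj.ne

lemma coeff_single_one_mul (m p : ℤ) (z : LaurentSeries k) :
    (single m 1 * z).coeff p = z.coeff (p - m) := by
  simpa using coeff_single_mul_add (r := (1 : k)) (x := z) (a := p - m) (b := m)

lemma mem_lattice_iff_exists_mul {m : ℤ} {z : LaurentSeries k} :
    z ∈ lattice m ↔ ∃ y ∈ lattice 0, z = single (1 : ℤ) 1 ^ m * y := by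
  rw [← RatFunc.single_zpow]
  refine ⟨fun h => ⟨single (-m) 1 * z, fun j hj => ?_, ?_⟩, ?_⟩
  · rw [coeff_single_one_mul]
    exact h _ (by omega)
  · rw [← mul_assoc, single_mul_single, add_neg_cancel, one_mul, single_zero_one, one_mul]
  · rintro ⟨y, hy, rfl⟩ j hj
    rw [coeff_single_one_mul]
    exact hy _ (by omega)

lemma map_eq_coeff_mul_of_mem_lattice {r : LaurentSeries k →ₗ[k] k} {ν : ℤ}
    (hr : ∀ z ∈ lattice ν, r z = 0) {z : LaurentSeries k} (hz : z ∈ lattice (ν - 1)) :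
    r z = z.coeff (ν - 1) * r (single (ν - 1) 1) := by
  have hdiff : z - z.coeff (ν - 1) • (single (ν - 1) 1 : LaurentSeries k) ∈ lattice ν := by
    intro j hj
    rcases eq_or_ne j (ν - 1) with rfl | hne
    · simp
    · simp [coeff_single_of_ne hne, hz j (by omega)]
  rw [← smul_eq_mul, ← map_smul, ← sub_eq_zero, ← map_sub, hr _ hdiff]

variable (k n) in
def latticePi (m : ℤ) : AddSubgroup (Fin n → LaurentSeries k) :=
  AddSubgroup.pi Set.univ fun _ => lattice m

@[simp]
lemma mem_latticePi {m : ℤ} {x : Fin n → LaurentSeries k} :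
    x ∈ latticePi k n m ↔ ∀ i, x i ∈ lattice m := by
  simp [latticePi, AddSubgroup.mem_pi]

lemma latticePi_antitone : Antitone (latticePi k n) :=
  fun _ _ h _ hx => mem_latticePi.2 fun i => lattice_antitone h (mem_latticePi.1 hx i)

lemma exists_mem_latticePi (x : Fin n → LaurentSeries k) (L : ℤ) :
    ∃ m ≤ L, x ∈ latticePi k n m := by
  refine ⟨L - ∑ i, (L - (x i).order).toNat, by omega, mem_latticePi.2 fun i => ?_⟩
  refine mem_lattice_iff_order.2 (or_iff_not_imp_left.2 fun _ => ?_)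
  have := Finset.single_le_sum (f := fun i => (L - (x i).order).toNat)
    (fun _ _ => Nat.zero_le _) (Finset.mem_univ i)
  omega

def ball (c : Fin n → LaurentSeries k) (m : ℤ) : Set (Fin n → LaurentSeries k) :=
  {x | x - c ∈ latticePi k n m}

lemma ball_eq_ball {c c' : Fin n → LaurentSeries k} {m : ℤ} (h : c - c' ∈ latticePi k n m) :
    ball c m = ball c' m := by
  ext x
  constructor <;> intro hx
  · simpa [ball] using (latticePi k n m).add_mem hx h
  · simpa [ball] using (latticePi k n m).sub_mem hx h

-- `Digits k n M L` indexes `(t^M R / t^L R)^n`: `ofDigits` is the representative whose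
-- coefficients vanish outside the degrees `[M, L)`, and `digits` reads a class off a vector.
noncomputable def ofDigits (M L : ℤ) : Digits k n M L →ₗ[k] Fin n → LaurentSeries k where
  toFun τ i :=
    { coeff := fun e => if h : e ∈ Finset.Ico M L then τ i ⟨e, h⟩ else 0
      isPWO_support' := (Finset.Ico M L).finite_toSet.isPWO.mono fun e he => by
        by_contra h
        exact he (dif_neg h) }
  map_add' τ τ' := by
    ext i e
    dsimp only [Pi.add_apply, coeff_add]
    split_ifs <;> simp
  map_smul' c τ := by
    ext i e
    dsimp only [Pi.smul_apply, coeff_smul, RingHom.id_apply]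
    split_ifs <;> simp

lemma coeff_ofDigits {M L : ℤ} (τ : Digits k n M L) (i : Fin n) (e : ℤ) :
    (ofDigits M L τ i).coeff e = if h : e ∈ Finset.Ico M L then τ i ⟨e, h⟩ else 0 :=
  rfl

def digits (M L : ℤ) (x : Fin n → LaurentSeries k) : Digits k n M L :=
  fun i j => (x i).coeff j

lemma ofDigits_mem_latticePi {m M L : ℤ} (h : m ≤ M) (τ : Digits k n M L) :
    ofDigits M L τ ∈ latticePi k n m :=
  mem_latticePi.2 fun i j hj => by
    rw [coeff_ofDigits, dif_neg (by simp only [Finset.mem_Ico]; omega)]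

lemma sub_ofDigits_mem_latticePi_iff {M L : ℤ} {x : Fin n → LaurentSeries k}
    (hx : x ∈ latticePi k n M) {τ : Digits k n M L} :
    x - ofDigits M L τ ∈ latticePi k n L ↔ τ = digits M L x := by
  simp only [mem_latticePi, mem_lattice, Pi.sub_apply, coeff_sub, coeff_ofDigits] at hx ⊢
  constructor
  · intro h
    funext i j
    have := h i j (Finset.mem_Ico.1 j.2).2
    rw [dif_pos j.2, sub_eq_zero] at this
    exact this.symm
  · rintro rfl i e he
    by_cases h : e ∈ Finset.Ico M L
    · simp [h, digits]
    · rw [dif_neg h, hx i e (by simp only [Finset.mem_Ico] at h; omega), sub_zero]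

lemma ofDigits_splitDigits_symm {M N L : ℤ} (hMN : M ≤ N) (hNL : N ≤ L)
    (p : Digits k n M N × Digits k n N L) :
    ofDigits M L ((splitDigits hMN hNL).symm p) = ofDigits M N p.1 + ofDigits N L p.2 := by
  ext i e
  simp only [Pi.add_apply, coeff_add, coeff_ofDigits, splitDigits, Equiv.coe_fn_symm_mk,
    Finset.mem_Ico]
  by_cases h₁ : M ≤ e <;> by_cases h₂ : e < N <;> by_cases h₃ : e < L <;>
    simp [h₁, h₂, h₃] <;> omega

lemma sum_digits_eq_sum_sum {β : Type*} [AddCommMonoid β] [Fintype k] {M N L : ℤ}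
    (hMN : M ≤ N) (hNL : N ≤ L) (F : (Fin n → LaurentSeries k) → β) :
    ∑ τ : Digits k n M L, F (ofDigits M L τ)
      = ∑ σ : Digits k n M N, ∑ ρ : Digits k n N L, F (ofDigits M N σ + ofDigits N L ρ) := by
  rw [← (splitDigits hMN hNL).symm.sum_comp, Fintype.sum_prod_type]
  simp only [ofDigits_splitDigits_symm]

lemma ball_zero_subset_iUnion_ball {M L : ℤ} :
    ball (0 : Fin n → LaurentSeries k) M ⊆ ⋃ τ : Digits k n M L, ball (ofDigits M L τ) L :=
  fun x hx => Set.mem_iUnion.2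
    ⟨_, (sub_ofDigits_mem_latticePi_iff (by simpa [ball] using hx)).2 rfl⟩

structure IsSchwartzBruhat (M L : ℤ) (f : (Fin n → LaurentSeries k) → ℂ) : Prop where
  mem_of_ne_zero : ∀ x, f x ≠ 0 → x ∈ latticePi k n M
  add_eq : ∀ x, ∀ z ∈ latticePi k n L, f (x + z) = f x

section Finite

variable [Fintype k]

lemma IsSchwartzBruhat.eq_sum_indicator {M L : ℤ} {f : (Fin n → LaurentSeries k) → ℂ}
    (hf : IsSchwartzBruhat M L f) (hML : M ≤ L) (x : Fin n → LaurentSeries k) :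
    f x = ∑ τ : Digits k n M L,
      (ball (ofDigits M L τ) L).indicator (fun _ => f (ofDigits M L τ)) x := by
  by_cases hx : x ∈ latticePi k n M
  · have hmem := (sub_ofDigits_mem_latticePi_iff (L := L) hx).2 rfl
    rw [Finset.sum_eq_single (digits M L x), Set.indicator_of_mem (show x ∈ ball _ L from hmem)]
    · simpa using hf.add_eq (ofDigits M L (digits M L x)) _ hmem
    · exact fun τ _ hτ => Set.indicator_of_notMem (show x ∉ ball _ L from
        fun h => hτ ((sub_ofDigits_mem_latticePi_iff hx).1 h)) _
    · simp
  · rw [not_imp_comm.1 (hf.mem_of_ne_zero x) hx]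
    refine (Finset.sum_eq_zero fun τ _ => Set.indicator_of_notMem (fun h => hx ?_) _).symm
    simpa using
      (latticePi k n M).add_mem (latticePi_antitone hML h) (ofDigits_mem_latticePi le_rfl τ)

open scoped Classical in
lemma IsSchwartzBruhat.sum_ite_add_mem_latticePi {M N : ℤ} {f : (Fin n → LaurentSeries k) → ℂ}
    (hf : IsSchwartzBruhat M N f) (hMN : M ≤ N) (x : Fin n → LaurentSeries k) :
    ∑ τ : Digits k n M N, (if ofDigits M N τ + x ∈ latticePi k n N then f (ofDigits M N τ) else 0)
      = f (-x) := by
  rw [hf.eq_sum_indicator hMN (-x)]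
  refine Finset.sum_congr rfl fun τ _ => ?_
  have : -x - ofDigits M N τ = -(ofDigits M N τ + x) := by abel
  simp only [Set.indicator_apply, ball, Set.mem_ofPred_eq, this, neg_mem_iff]

end Finite

section Measure

variable [Fintype k] [MeasurableSpace (Fin n → LaurentSeries k)]
  {μ : Measure (Fin n → LaurentSeries k)}

variable (μ) in
def IsNormalizedHaar : Prop :=
  ∀ c L, μ (ball c L) = ENNReal.ofReal ((Fintype.card k : ℝ) ^ (-((n : ℤ) * L)))

namespace IsNormalizedHaar

lemma of_measure_setOf
    (hμ : ∀ (c : Fin n → LaurentSeries k) (L : ℤ),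
      μ {x | ∀ i, ∃ y : LaurentSeries k, (∀ j : ℤ, j < 0 → y.coeff j = 0) ∧
          x i = c i + (single (1 : ℤ) (1 : k) : LaurentSeries k) ^ L * y}
        = ENNReal.ofReal (∏ _i : Fin n, (Fintype.card k : ℝ) ^ (-L))) :
    IsNormalizedHaar μ := by
  intro c L
  have hball : ball c L = {x | ∀ i, ∃ y : LaurentSeries k, (∀ j : ℤ, j < 0 → y.coeff j = 0) ∧
      x i = c i + (single (1 : ℤ) (1 : k) : LaurentSeries k) ^ L * y} := by
    ext x
    refine mem_latticePi.trans (forall_congr' fun i => ?_)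
    rw [Pi.sub_apply, mem_lattice_iff_exists_mul]
    simp only [sub_eq_iff_eq_add']
    rfl
  rw [hball, hμ, Finset.prod_const, Finset.card_univ, Fintype.card_fin, ← zpow_natCast,
    ← zpow_mul, neg_mul, mul_comm]

lemma measure_ball_ne_top (hμ : IsNormalizedHaar μ) (c : Fin n → LaurentSeries k) (L : ℤ) :
    μ (ball c L) ≠ ⊤ := by
  rw [hμ]
  exact ENNReal.ofReal_ne_top

lemma sum_measure_ball (hμ : IsNormalizedHaar μ) {M L : ℤ} (hML : M ≤ L) :
    ∑ τ : Digits k n M L, μ (ball (ofDigits M L τ) L) = μ (ball 0 M) := by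
  rw [hμ, Finset.sum_congr rfl fun τ _ => hμ _ _, Finset.sum_const, Finset.card_univ,
    nsmul_eq_mul, ← ENNReal.ofReal_natCast, ← ENNReal.ofReal_mul (by positivity),
    card_digits_mul_zpow hML]

lemma aedisjoint_toMeasurable_ball (hμ : IsNormalizedHaar μ) {M L : ℤ} (hML : M ≤ L)
    {τ τ' : Digits k n M L} (h : τ ≠ τ') :
    AEDisjoint μ (toMeasurable μ (ball (ofDigits M L τ) L))
      (toMeasurable μ (ball (ofDigits M L τ') L)) := by
  refine aedisjoint_of_sum_measure_le (s := fun τ => toMeasurable μ (ball (ofDigits M L τ) L))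
    (fun _ => measurableSet_toMeasurable _ _) ?_ ?_ h
  · simp only [measure_toMeasurable]
    rw [hμ.sum_measure_ball hML]
    exact measure_mono (ball_zero_subset_iUnion_ball.trans
      (Set.iUnion_mono fun _ => subset_toMeasurable _ _))
  · simp only [measure_toMeasurable]
    exact ENNReal.sum_ne_top.2 fun _ _ => hμ.measure_ball_ne_top _ _

lemma nullMeasurableSet_ball (hμ : IsNormalizedHaar μ) (c : Fin n → LaurentSeries k) (L : ℤ) :
    NullMeasurableSet (ball c L) μ := by
  obtain ⟨m, hmL, hc⟩ := exists_mem_latticePi c L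
  set H := toMeasurable μ (ball c L)
  have hH : ∀ j : ℕ, H = toMeasurable μ (ball (ofDigits (m - j) L (digits (m - j) L c)) L) :=
    fun j => by
      rw [show H = toMeasurable μ (ball c L) from rfl, ball_eq_ball
        ((sub_ofDigits_mem_latticePi_iff (latticePi_antitone (show m - j ≤ m by omega) hc)).2 rfl)]
  have hcover : H \ ball c L ⊆ ⋃ (j : ℕ) (τ : Digits k n (m - j) L)
      (_ : τ ≠ digits (m - j) L c), H ∩ toMeasurable μ (ball (ofDigits (m - j) L τ) L) := by
    rintro x ⟨hxH, hxc⟩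
    obtain ⟨m', -, hx⟩ := exists_mem_latticePi x m
    have hx' := latticePi_antitone (show m - (m - m').toNat ≤ m' by omega) hx
    have hxτ := (sub_ofDigits_mem_latticePi_iff (L := L) hx').2 rfl
    refine Set.mem_iUnion₂.2 ⟨(m - m').toNat, _, Set.mem_iUnion.2 ⟨fun h => hxc ?_,
      hxH, subset_toMeasurable _ _ hxτ⟩⟩
    have hcτ := (sub_ofDigits_mem_latticePi_iff (L := L)
      (latticePi_antitone (show m - (m - m').toNat ≤ m by omega) hc)).2 rfl
    rw [h] at hxτ
    simpa [ball] using (latticePi k n L).sub_mem hxτ hcτ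
  have hnull : μ (H \ ball c L) = 0 :=
    measure_mono_null hcover <| measure_iUnion_null fun j => measure_iUnion_null fun τ =>
      measure_iUnion_null fun hτ => by
        rw [hH j]
        exact hμ.aedisjoint_toMeasurable_ball (by omega) (Ne.symm hτ)
  exact (measurableSet_toMeasurable μ _).nullMeasurableSet.congr
    (ae_eq_set.2 ⟨hnull, by simp [Set.sdiff_eq_empty.2 (subset_toMeasurable μ (ball c L))]⟩)

lemma integrable_indicator_ball (hμ : IsNormalizedHaar μ) (c : Fin n → LaurentSeries k) (L : ℤ)
    (a : ℂ) : Integrable ((ball c L).indicator fun _ => a) μ :=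
  (integrableOn_const (hμ.measure_ball_ne_top c L)).integrable_indicator₀
    (hμ.nullMeasurableSet_ball c L)

lemma integral_indicator_ball (hμ : IsNormalizedHaar μ) (c : Fin n → LaurentSeries k) (L : ℤ)
    (a : ℂ) :
    ∫ x, (ball c L).indicator (fun _ => a) x ∂μ
      = (Fintype.card k : ℂ) ^ (-((n : ℤ) * L)) * a := by
  rw [integral_indicator₀ (hμ.nullMeasurableSet_ball c L), setIntegral_const, measureReal_def, hμ,
    ENNReal.toReal_ofReal (by positivity), Complex.real_smul]
  push_cast
  rfl

end IsNormalizedHaar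

namespace IsSchwartzBruhat

variable {M L : ℤ} {f : (Fin n → LaurentSeries k) → ℂ}

lemma integrable (hf : IsSchwartzBruhat M L f) (hμ : IsNormalizedHaar μ) (hML : M ≤ L) :
    Integrable f μ :=
  (integrable_finsetSum _ fun _ _ => hμ.integrable_indicator_ball _ L _).congr
    (Filter.Eventually.of_forall fun x => (hf.eq_sum_indicator hML x).symm)

lemma integral_eq_sum (hf : IsSchwartzBruhat M L f) (hμ : IsNormalizedHaar μ) (hML : M ≤ L) :
    ∫ x, f x ∂μ
      = (Fintype.card k : ℂ) ^ (-((n : ℤ) * L)) * ∑ τ : Digits k n M L, f (ofDigits M L τ) := by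
  calc ∫ x, f x ∂μ
      = ∫ x, ∑ τ : Digits k n M L,
          (ball (ofDigits M L τ) L).indicator (fun _ => f (ofDigits M L τ)) x ∂μ :=
        integral_congr_ae (Filter.Eventually.of_forall (hf.eq_sum_indicator hML))
    _ = _ := by
      rw [integral_finsetSum _ fun τ _ => hμ.integrable_indicator_ball _ L _, Finset.mul_sum]
      simp only [hμ.integral_indicator_ball]

end IsSchwartzBruhat

end Measure

-- Not found by instance search: the `k`-module structure of `LaurentSeries k` is the
-- coefficientwise one, not the one coming from `Algebra k (LaurentSeries k)`.
instance : IsScalarTower k (LaurentSeries k) (LaurentSeries k) :=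
  ⟨fun c u v => show (c • u) * v = c • (u * v) by
    rw [← C_mul_eq_smul, ← C_mul_eq_smul, mul_assoc]⟩

structure IsConductor (r : LaurentSeries k →ₗ[k] k) (ν : ℤ) : Prop where
  map_eq_zero : ∀ z ∈ lattice ν, r z = 0
  map_single_ne_zero : r (single (ν - 1) 1) ≠ 0

namespace IsConductor

variable {r : LaurentSeries k →ₗ[k] k} {ν : ℤ}

lemma of_order (h₁ : ∀ x : LaurentSeries k, x ≠ 0 → ν ≤ x.order → r x = 0)
    (h₂ : ∃ x : LaurentSeries k, x ≠ 0 ∧ ν - 1 ≤ x.order ∧ r x ≠ 0) : IsConductor r ν := by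
  have hzero : ∀ z ∈ lattice ν, r z = 0 := fun z hz => by
    rcases eq_or_ne z 0 with rfl | hz0
    · exact map_zero r
    · exact h₁ z hz0 ((mem_lattice_iff_order.1 hz).resolve_left hz0)
  refine ⟨hzero, fun h => ?_⟩
  obtain ⟨x, -, hord, hrx⟩ := h₂
  rw [map_eq_coeff_mul_of_mem_lattice hzero (mem_lattice_iff_order.2 (Or.inr hord)), h,
    mul_zero] at hrx
  exact hrx rfl

lemma map_mul_eq_zero (hr : IsConductor r ν) {i j : ℤ} {a b : LaurentSeries k}
    (ha : a ∈ lattice i) (hb : b ∈ lattice j) (h : ν ≤ i + j) : r (a * b) = 0 :=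
  hr.map_eq_zero _ (lattice_antitone h (mul_mem_lattice ha hb))

lemma map_sum_mul_eq_zero (hr : IsConductor r ν) {i j : ℤ} {x y : Fin n → LaurentSeries k}
    (hx : x ∈ latticePi k n i) (hy : y ∈ latticePi k n j) (h : ν ≤ i + j) :
    r (∑ l, x l * y l) = 0 := by
  rw [map_sum]
  exact Finset.sum_eq_zero fun l _ =>
    hr.map_mul_eq_zero (mem_latticePi.1 hx l) (mem_latticePi.1 hy l) h

lemma map_single_mul_ne_zero (hr : IsConductor r ν) {y : LaurentSeries k} (hy : y ≠ 0) :
    r (single (ν - 1 - y.order) 1 * y) ≠ 0 := by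
  have hmem : single (ν - 1 - y.order) 1 * y ∈ lattice (ν - 1) := by
    simpa using mul_mem_lattice (single_mem_lattice (ν - 1 - y.order) (1 : k))
      (mem_lattice_iff_order.2 (Or.inr le_rfl) : y ∈ lattice y.order)
  rw [map_eq_coeff_mul_of_mem_lattice hr.map_eq_zero hmem, coeff_single_one_mul, sub_sub_cancel]
  exact mul_ne_zero (fun h => hy (coeff_order_eq_zero.1 h)) hr.map_single_ne_zero

lemma exists_map_sum_ofDigits_mul_ne_zero (hr : IsConductor r ν) {N L : ℤ}
    {w : Fin n → LaurentSeries k} (hw : w ∈ latticePi k n (ν - L))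
    (hwN : w ∉ latticePi k n (ν - N)) :
    ∃ τ : Digits k n N L, r (∑ i, ofDigits N L τ i * w i) ≠ 0 := by
  obtain ⟨i, hi⟩ := not_forall.1 (mt mem_latticePi.2 hwN)
  have hwi : w i ≠ 0 := fun h => hi (h ▸ zero_mem _)
  have hlt : (w i).order < ν - N := by
    by_contra! h
    exact hi (mem_lattice_iff_order.2 (Or.inr h))
  have hge : ν - L ≤ (w i).order :=
    (mem_lattice_iff_order.1 (mem_latticePi.1 hw i)).resolve_left hwi
  set x : Fin n → LaurentSeries k := Pi.single i (single (ν - 1 - (w i).order) 1)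
  have hxi : single (ν - 1 - (w i).order) (1 : k) ∈ lattice N :=
    lattice_antitone (show N ≤ ν - 1 - (w i).order by omega) (single_mem_lattice _ _)
  have hx : x ∈ latticePi k n N := mem_latticePi.2 fun l => by
    rw [show x l = _ from Pi.single_apply i _ l]
    split_ifs
    exacts [hxi, zero_mem _]
  have hrest := hr.map_sum_mul_eq_zero ((sub_ofDigits_mem_latticePi_iff (L := L) hx).2 rfl) hw
    (by omega)
  refine ⟨digits N L x, fun h => hr.map_single_mul_ne_zero hwi ?_⟩
  calc r (single (ν - 1 - (w i).order) 1 * w i) = r (∑ l, x l * w l) := by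
        congr 1
        simp [x, Pi.single_apply]
    _ = r (∑ l, (x - ofDigits N L (digits N L x)) l * w l)
          + r (∑ l, ofDigits N L (digits N L x) l * w l) := by
      rw [← map_add, ← Finset.sum_add_distrib]
      simp [sub_mul]
    _ = 0 := by rw [hrest, h, add_zero]

open scoped Classical in
lemma sum_addChar_ofDigits [Fintype k] {ψ : AddChar k ℂ} (hψ : ψ ≠ 1)
    (hr : IsConductor r ν) {N L : ℤ}
    {w : Fin n → LaurentSeries k} (hw : w ∈ latticePi k n (ν - L)) :
    ∑ τ : Digits k n N L, ψ (r (∑ i, ofDigits N L τ i * w i))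
      = if w ∈ latticePi k n (ν - N) then (Fintype.card (Digits k n N L) : ℂ) else 0 := by
  let ℓ : Digits k n N L →ₗ[k] k :=
    r ∘ₗ (∑ i, LinearMap.mulRight k (w i) ∘ₗ LinearMap.proj i) ∘ₗ ofDigits N L
  have hℓ : ∀ τ, ℓ τ = r (∑ i, ofDigits N L τ i * w i) := fun τ => by simp [ℓ]
  simp only [← hℓ]
  split_ifs with hwN
  · have : ℓ = 0 := LinearMap.ext fun τ => by
      rw [hℓ]
      exact hr.map_sum_mul_eq_zero (ofDigits_mem_latticePi le_rfl τ) hwN (by omega)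
    simp [this]
  · obtain ⟨τ, hτ⟩ := hr.exists_map_sum_ofDigits_mul_ne_zero hw hwN
    exact sum_addChar_comp_eq_zero hψ fun h => hτ (by rw [← hℓ, h, LinearMap.zero_apply])

end IsConductor

lemma IsSchwartzBruhat.mul_addChar {ψ : AddChar k ℂ} {r : LaurentSeries k →ₗ[k] k} {ν : ℤ}
    (hr : IsConductor r ν) {M N L : ℤ} {f : (Fin n → LaurentSeries k) → ℂ}
    (hf : IsSchwartzBruhat M N f) (hNL : N ≤ L) {y : Fin n → LaurentSeries k}
    (hy : y ∈ latticePi k n (ν - L)) :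
    IsSchwartzBruhat M L fun x => f x * ψ (r (∑ i, x i * y i)) where
  mem_of_ne_zero x hx := hf.mem_of_ne_zero x (left_ne_zero_of_mul hx)
  add_eq x z hz := by
    have hzy := hr.map_sum_mul_eq_zero hz hy (by omega)
    rw [hf.add_eq x z (latticePi_antitone hNL hz)]
    simp only [Pi.add_apply, add_mul, Finset.sum_add_distrib, map_add, hzy, add_zero]

lemma isSchwartzBruhat_indicator_latticePi (m : ℤ) :
    IsSchwartzBruhat m m ((latticePi k n m : Set (Fin n → LaurentSeries k)).indicator 1) where
  mem_of_ne_zero _ hx := Set.mem_of_indicator_ne_zero hx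
  add_eq x z hz := by
    classical
    simp only [Set.indicator_apply, SetLike.mem_coe, (latticePi k n m).add_mem_cancel_right hz,
      Pi.one_apply]

section Fourier

variable [Fintype k] [MeasurableSpace (Fin n → LaurentSeries k)]
  {μ : Measure (Fin n → LaurentSeries k)} {ψ : AddChar k ℂ} {r : LaurentSeries k →ₗ[k] k} {ν : ℤ}

open scoped Classical in
theorem IsSchwartzBruhat.fourierTransform_eq (hμ : IsNormalizedHaar μ) (hψ : ψ ≠ 1)
    (hr : IsConductor r ν) {M N : ℤ} {f : (Fin n → LaurentSeries k) → ℂ}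
    (hf : IsSchwartzBruhat M N f) (hMN : M ≤ N) (y : Fin n → LaurentSeries k) :
    fourierTransform k n μ ψ r f y =
      if y ∈ latticePi k n (ν - N) then
        (Fintype.card k : ℂ) ^ (-((n : ℤ) * N))
          * ∑ τ : Digits k n M N, f (ofDigits M N τ) * ψ (r (∑ i, ofDigits M N τ i * y i))
      else 0 := by
  obtain ⟨m, hm, hy⟩ := exists_mem_latticePi y (ν - N)
  have hNL : N ≤ ν - m := by omega
  have hy' : y ∈ latticePi k n (ν - (ν - m)) := by rwa [sub_sub_cancel]
  have hsplit : ∀ (σ : Digits k n M N) (ρ : Digits k n N (ν - m)),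
      f (ofDigits M N σ + ofDigits N (ν - m) ρ)
          * ψ (r (∑ i, (ofDigits M N σ + ofDigits N (ν - m) ρ) i * y i))
        = f (ofDigits M N σ) * ψ (r (∑ i, ofDigits M N σ i * y i))
          * ψ (r (∑ i, ofDigits N (ν - m) ρ i * y i)) := fun σ ρ => by
    rw [hf.add_eq _ _ (ofDigits_mem_latticePi le_rfl ρ), mul_assoc, ← AddChar.map_add_eq_mul,
      ← map_add, ← Finset.sum_add_distrib]
    simp only [Pi.add_apply, add_mul]
  rw [fourierTransform, (hf.mul_addChar hr hNL hy').integral_eq_sum hμ (hMN.trans hNL),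
    sum_digits_eq_sum_sum hMN hNL fun z => f z * ψ (r (∑ i, z i * y i))]
  simp only [hsplit, ← Finset.mul_sum, ← Finset.sum_mul, hr.sum_addChar_ofDigits hψ hy']
  split_ifs
  · rw [← card_digits_mul_zpow hNL]
    ring
  · simp

open scoped Classical in
lemma fourierTransform_indicator_latticePi (hμ : IsNormalizedHaar μ) (hψ : ψ ≠ 1)
    (hr : IsConductor r ν) (m : ℤ) (w : Fin n → LaurentSeries k) :
    fourierTransform k n μ ψ r ((latticePi k n m : Set _).indicator 1) w =
      if w ∈ latticePi k n (ν - m) then (Fintype.card k : ℂ) ^ (-((n : ℤ) * m)) else 0 := by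
  have hzero : ∀ τ : Digits k n m m, ofDigits m m τ = 0 := fun τ => by
    ext i e
    simp [coeff_ofDigits]
  rw [(isSchwartzBruhat_indicator_latticePi m).fourierTransform_eq hμ hψ hr le_rfl]
  split_ifs <;> simp [hzero]

lemma integrable_indicator_latticePi_mul_addChar (hμ : IsNormalizedHaar μ)
    (hr : IsConductor r ν) (m : ℤ) (w : Fin n → LaurentSeries k) :
    Integrable (fun y => (latticePi k n m : Set _).indicator 1 y * ψ (r (∑ i, y i * w i))) μ := by
  obtain ⟨m', hm', hw⟩ := exists_mem_latticePi w (ν - m)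
  refine ((isSchwartzBruhat_indicator_latticePi m).mul_addChar hr
    (show m ≤ ν - m' by omega) ?_).integrable hμ (by omega)
  rwa [sub_sub_cancel]

lemma IsSchwartzBruhat.fourierTransform_mul_addChar (hμ : IsNormalizedHaar μ) (hψ : ψ ≠ 1)
    (hr : IsConductor r ν) {M N : ℤ} {f : (Fin n → LaurentSeries k) → ℂ}
    (hf : IsSchwartzBruhat M N f) (hMN : M ≤ N) (x y : Fin n → LaurentSeries k) :
    fourierTransform k n μ ψ r f y * ψ (r (∑ i, y i * x i))
      = (Fintype.card k : ℂ) ^ (-((n : ℤ) * N)) * ∑ τ : Digits k n M N, f (ofDigits M N τ)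
          * ((latticePi k n (ν - N) : Set _).indicator 1 y
            * ψ (r (∑ i, y i * (ofDigits M N τ + x) i))) := by
  classical
  rw [hf.fourierTransform_eq hμ hψ hr hMN]
  split_ifs with hy
  · simp only [Set.indicator_of_mem (show y ∈ (latticePi k n (ν - N) : Set _) from hy),
      Pi.one_apply, one_mul, Finset.mul_sum, Finset.sum_mul, mul_assoc, ← AddChar.map_add_eq_mul,
      ← map_add, ← Finset.sum_add_distrib, Pi.add_apply, add_mul, mul_comm (y _)]
  · simp [hy]

theorem IsSchwartzBruhat.fourierTransform_fourierTransform (hμ : IsNormalizedHaar μ)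
    (hψ : ψ ≠ 1) (hr : IsConductor r ν) {M N : ℤ} {f : (Fin n → LaurentSeries k) → ℂ}
    (hf : IsSchwartzBruhat M N f) (hMN : M ≤ N) (x : Fin n → LaurentSeries k) :
    fourierTransform k n μ ψ r (fourierTransform k n μ ψ r f) x
      = (Fintype.card k : ℂ) ^ (-((n : ℤ) * ν)) * f (-x) := by
  classical
  have hq : (Fintype.card k : ℂ) ≠ 0 := Nat.cast_ne_zero.2 Fintype.card_ne_zero
  calc fourierTransform k n μ ψ r (fourierTransform k n μ ψ r f) x
      = (Fintype.card k : ℂ) ^ (-((n : ℤ) * N)) * ∑ τ : Digits k n M N,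
          f (ofDigits M N τ) * fourierTransform k n μ ψ r
            ((latticePi k n (ν - N) : Set _).indicator 1) (ofDigits M N τ + x) := by
        change ∫ y, fourierTransform k n μ ψ r f y * ψ (r (∑ i, y i * x i)) ∂μ = _
        simp only [hf.fourierTransform_mul_addChar hμ hψ hr hMN x]
        rw [integral_const_mul, integral_finsetSum _ fun τ _ =>
          (integrable_indicator_latticePi_mul_addChar hμ hr _ _).const_mul _]
        simp only [integral_const_mul]
        rfl
    _ = (Fintype.card k : ℂ) ^ (-((n : ℤ) * N)) * ∑ τ : Digits k n M N,
          (if ofDigits M N τ + x ∈ latticePi k n N then f (ofDigits M N τ) else 0)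
            * (Fintype.card k : ℂ) ^ (-((n : ℤ) * (ν - N))) := by
        simp only [fourierTransform_indicator_latticePi hμ hψ hr, sub_sub_cancel, mul_ite,
          ite_mul, mul_zero, zero_mul]
    _ = (Fintype.card k : ℂ) ^ (-((n : ℤ) * ν)) * f (-x) := by
        rw [← Finset.sum_mul, hf.sum_ite_add_mem_latticePi hMN x,
          show -((n : ℤ) * ν) = -(n * N) + -(n * (ν - N)) by ring, zpow_add₀ hq]
        ring

end Fourier

end LocalFourier

theorem stmt_16_general (k : Type*) [Field k] [Fintype k]
    (ψ : AddChar k ℂ) (hψ : ψ ≠ 1)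
    (r : LaurentSeries k →ₗ[k] k)
    (ν : ℤ)
    (hν₁ : ∀ x : LaurentSeries k, x ≠ 0 → ν ≤ x.order → r x = 0)
    (hν₂ : ∃ x : LaurentSeries k, x ≠ 0 ∧ ν - 1 ≤ x.order ∧ r x ≠ 0)
    (n : ℕ)
    [MeasurableSpace (Fin n → LaurentSeries k)]
    (μ : Measure (Fin n → LaurentSeries k))
    (hμ : ∀ (c : Fin n → LaurentSeries k) (m : Fin n → ℤ),
      μ {x : Fin n → LaurentSeries k | ∀ i, ∃ y : LaurentSeries k,
          (∀ i' : ℤ, i' < 0 → y.coeff i' = 0) ∧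
          x i = c i + (HahnSeries.single (1 : ℤ) (1 : k) : LaurentSeries k) ^ (m i) * y}
        = ENNReal.ofReal (∏ i, (Fintype.card k : ℝ) ^ (-(m i))))
    (φ : (Fin n → LaurentSeries k) → ℂ) (M N : ℤ) (hMN : M ≤ N)
    (hsupp : ∀ x, φ x ≠ 0 → ∀ i, x i = 0 ∨ M ≤ (x i).order)
    (hinv : ∀ x y : Fin n → LaurentSeries k,
      (∀ i, y i = 0 ∨ N ≤ (y i).order) → φ (x + y) = φ x) :
    ∀ x : Fin n → LaurentSeries k,
      fourierTransform k n μ ψ r (fourierTransform k n μ ψ r φ) x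
        = (Fintype.card k : ℂ) ^ (-((n : ℤ) * ν)) * φ (-x) := by
  have hφ : LocalFourier.IsSchwartzBruhat M N φ :=
    ⟨fun x hx => LocalFourier.mem_latticePi.2 fun i =>
        LocalFourier.mem_lattice_iff_order.2 (hsupp x hx i),
      fun x y hy => hinv x y fun i =>
        LocalFourier.mem_lattice_iff_order.1 (LocalFourier.mem_latticePi.1 hy i)⟩
  exact hφ.fourierTransform_fourierTransform
    (.of_measure_setOf fun c L => hμ c fun _ => L) hψ (.of_order hν₁ hν₂) hMN

/-- Local Fourier inversion over `K = k((t))`, `k` a finite field of cardinality `q`: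
if `r : K → k` is a nonzero `k`-linear map of conductor `ν` and `φ` is a
Schwartz–Bruhat function on `K^n` of some level `(M,N)` (supported on `(t^M R)^n` and
invariant under `(t^N R)^n`), then `𝓕𝓕φ(x) = q^{−nν} φ(−x)`. -/
theorem stmt_16 (k : Type*) [Field k] [Fintype k]
    (ψ : AddChar k ℂ) (hψ : ψ ≠ 1)
    (r : LaurentSeries k →ₗ[k] k) (hr : r ≠ 0)
    (ν : ℤ)
    (hν₁ : ∀ x : LaurentSeries k, x ≠ 0 → ν ≤ x.order → r x = 0)
    (hν₂ : ∃ x : LaurentSeries k, x ≠ 0 ∧ ν - 1 ≤ x.order ∧ r x ≠ 0)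
    (n : ℕ)
    [MeasurableSpace (Fin n → LaurentSeries k)]
    (μ : Measure (Fin n → LaurentSeries k))
    (hμ : ∀ (c : Fin n → LaurentSeries k) (m : Fin n → ℤ),
      μ {x : Fin n → LaurentSeries k | ∀ i, ∃ y : LaurentSeries k,
          (∀ i' : ℤ, i' < 0 → y.coeff i' = 0) ∧
          x i = c i + (HahnSeries.single (1 : ℤ) (1 : k) : LaurentSeries k) ^ (m i) * y}
        = ENNReal.ofReal (∏ i, (Fintype.card k : ℝ) ^ (-(m i))))
    (φ : (Fin n → LaurentSeries k) → ℂ) (M N : ℤ) (hMN : M ≤ N)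
    (hsupp : ∀ x, φ x ≠ 0 → ∀ i, x i = 0 ∨ M ≤ (x i).order)
    (hinv : ∀ x y : Fin n → LaurentSeries k,
      (∀ i, y i = 0 ∨ N ≤ (y i).order) → φ (x + y) = φ x) :
    ∀ x : Fin n → LaurentSeries k,
      fourierTransform k n μ ψ r (fourierTransform k n μ ψ r φ) x
        = (Fintype.card k : ℂ) ^ (-((n : ℤ) * ν)) * φ (-x) :=
  stmt_16_general k ψ hψ r ν hν₁ hν₂ n μ hμ φ M N hMN hsupp hinv
end
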